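/- arXiv:2309.06254 — 2 statements merged into one kernel-verified Lean document; each statement's English description precedes it below -/
import Mathlib

section
/- Let H : ℝ³ → ℝ³ be continuously differentiable on an open set with div H ≡ 0 and curl H ≡ 0. Suppose φ : ℝ² → ℝ³ is differentiable at (0,0) with φ(0,0) = x₀, and H ∘ φ is constant in a neighborhood of (0,0), and the partial derivatives ∂τφ(0,0), ∂σφ(0,0) are linearly independent. Then DH(x₀) = 0. -/
set_option maxHeartbeats 1000000

theorem stmt_5 (H : (Fin 3 → ℝ) → (Fin 3 → ℝ)) (x₀ : Fin 3 → ℝ)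
    (hH : DifferentiableAt ℝ H x₀)
    (hdiv : ∑ i, fderiv ℝ H x₀ (Pi.single i 1) i = 0)
    (hcurl : ∀ i j, fderiv ℝ H x₀ (Pi.single j 1) i = fderiv ℝ H x₀ (Pi.single i 1) j)
    (φ : ℝ × ℝ → (Fin 3 → ℝ)) (Dφ : ℝ × ℝ →L[ℝ] (Fin 3 → ℝ))
    (hφ : HasFDerivAt φ Dφ (0, 0)) (hφ0 : φ (0, 0) = x₀)
    (hconst : (H ∘ φ) =ᶠ[nhds ((0 : ℝ), (0 : ℝ))] fun _ => H x₀)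
    (hind : LinearIndependent ℝ ![Dφ (1, 0), Dφ (0, 1)]) :
    fderiv ℝ H x₀ = 0 := by
  set A := fderiv ℝ H x₀ with hAdef
  have hHd : HasFDerivAt H A (φ (0, 0)) := by rw [hφ0]; exact hH.hasFDerivAt
  have hcomp : HasFDerivAt (H ∘ φ) (A.comp Dφ) (0, 0) := hHd.comp _ hφ
  have hzero : HasFDerivAt (H ∘ φ) (0 : (ℝ × ℝ) →L[ℝ] (Fin 3 → ℝ)) (0, 0) :=
    (hasFDerivAt_const (H x₀) ((0 : ℝ), (0 : ℝ))).congr_of_eventuallyEq hconst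
  have hAD : A.comp Dφ = 0 := hcomp.unique hzero
  set u := Dφ (1, 0) with hu_def
  set v := Dφ (0, 1) with hv_def
  have hAu : A u = 0 := by
    rw [hu_def, ← ContinuousLinearMap.comp_apply, hAD]; rfl
  have hAv : A v = 0 := by
    rw [hv_def, ← ContinuousLinearMap.comp_apply, hAD]; rfl
  set a : Fin 3 → Fin 3 → ℝ := fun i j => A (Pi.single j 1) i with ha_def
  have hlin : ∀ x : Fin 3 → ℝ, ∀ i, A x i = ∑ j, a i j * x j := by
    intro x i
    have hx : x = ∑ j, x j • (Pi.single j (1 : ℝ) : Fin 3 → ℝ) := by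
      funext k
      simp [Pi.single_apply]
    conv_lhs => rw [hx]
    rw [map_sum]
    simp [Finset.sum_apply, ha_def, mul_comm]
  have hu3 : ∀ i, a i 0 * u 0 + a i 1 * u 1 + a i 2 * u 2 = 0 := by
    intro i
    have h := hlin u i
    rw [hAu] at h
    simpa [Fin.sum_univ_three] using h.symm
  have hv3 : ∀ i, a i 0 * v 0 + a i 1 * v 1 + a i 2 * v 2 = 0 := by
    intro i
    have h := hlin v i
    rw [hAv] at h
    simpa [Fin.sum_univ_three] using h.symm
  have hsym : ∀ i j, a i j = a j i := by
    intro i j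
    simp only [ha_def]
    exact hcurl i j
  have htr : a 0 0 + a 1 1 + a 2 2 = 0 := by
    simpa [Fin.sum_univ_three, ha_def] using hdiv
  have hN : ((u 1 * v 2 - u 2 * v 1) ^ 2 + (u 2 * v 0 - u 0 * v 2) ^ 2 + (u 0 * v 1 - u 1 * v 0) ^ 2) ≠ 0 := by
    intro h
    have sq0 : ∀ x y z : ℝ, x ^ 2 + y ^ 2 + z ^ 2 = 0 → x = 0 := by
      intro x y z hxyz
      nlinarith [sq_nonneg x, sq_nonneg y, sq_nonneg z]
    have h0 : (u 1 * v 2 - u 2 * v 1) = 0 := sq0 _ _ _ h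
    have h1 : (u 2 * v 0 - u 0 * v 2) = 0 := sq0 (u 2 * v 0 - u 0 * v 2) (u 0 * v 1 - u 1 * v 0) (u 1 * v 2 - u 2 * v 1) (by linarith)
    have h2 : (u 0 * v 1 - u 1 * v 0) = 0 := sq0 (u 0 * v 1 - u 1 * v 0) (u 1 * v 2 - u 2 * v 1) (u 2 * v 0 - u 0 * v 2) (by linarith)
    rw [LinearIndependent.pair_iff] at hind
    have hune : u ≠ 0 := by
      intro hu0
      have := hind 1 0 (by rw [hu0]; simp)
      exact one_ne_zero this.1
    have hex : ∃ k, u k ≠ 0 := by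
      by_contra hc
      push_neg at hc
      exact hune (funext fun k => hc k)
    obtain ⟨k, hk⟩ := hex
    have c00 : v 0 * u 0 - u 0 * v 0 = 0 := by ring
    have c11 : v 1 * u 1 - u 1 * v 1 = 0 := by ring
    have c22 : v 2 * u 2 - u 2 * v 2 = 0 := by ring
    have c01 : v 0 * u 1 - u 0 * v 1 = 0 := by linear_combination (-1 : ℝ) * h2
    have c02 : v 0 * u 2 - u 0 * v 2 = 0 := by linear_combination h1
    have c10 : v 1 * u 0 - u 1 * v 0 = 0 := by linear_combination h2
    have c12 : v 1 * u 2 - u 1 * v 2 = 0 := by linear_combination (-1 : ℝ) * h0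
    have c20 : v 2 * u 0 - u 2 * v 0 = 0 := by linear_combination (-1 : ℝ) * h1
    have c21 : v 2 * u 1 - u 2 * v 1 = 0 := by linear_combination h0
    have hcomp2 : ∀ j, v k * u j - u k * v j = 0 := by
      intro j
      fin_cases k <;> fin_cases j <;> simp only [Fin.mk_zero, Fin.mk_one, Fin.reduceFinMk] <;>
        assumption
    have hdep : (v k) • u + (-(u k)) • v = 0 := by
      funext j
      have := hcomp2 j
      simp only [Pi.add_apply, Pi.smul_apply, smul_eq_mul, Pi.zero_apply]
      linear_combination this
    exact hk (neg_eq_zero.mp (hind _ _ hdep).2)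
  have key0 : ∀ i : Fin 3, ((u 1 * v 2 - u 2 * v 1) ^ 2 + (u 2 * v 0 - u 0 * v 2) ^ 2 + (u 0 * v 1 - u 1 * v 0) ^ 2) * a i 0 = (u 1 * v 2 - u 2 * v 1) * (a i 0 * (u 1 * v 2 - u 2 * v 1) + a i 1 * (u 2 * v 0 - u 0 * v 2) + a i 2 * (u 0 * v 1 - u 1 * v 0)) := by
    intro i
    linear_combination (u 0 * (v 0 * v 0 + v 1 * v 1 + v 2 * v 2) - v 0 * (u 0 * v 0 + u 1 * v 1 + u 2 * v 2)) * hu3 i + (v 0 * (u 0 * u 0 + u 1 * u 1 + u 2 * u 2) - u 0 * (u 0 * v 0 + u 1 * v 1 + u 2 * v 2)) * hv3 i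
  have key1 : ∀ i : Fin 3, ((u 1 * v 2 - u 2 * v 1) ^ 2 + (u 2 * v 0 - u 0 * v 2) ^ 2 + (u 0 * v 1 - u 1 * v 0) ^ 2) * a i 1 = (u 2 * v 0 - u 0 * v 2) * (a i 0 * (u 1 * v 2 - u 2 * v 1) + a i 1 * (u 2 * v 0 - u 0 * v 2) + a i 2 * (u 0 * v 1 - u 1 * v 0)) := by
    intro i
    linear_combination (u 1 * (v 0 * v 0 + v 1 * v 1 + v 2 * v 2) - v 1 * (u 0 * v 0 + u 1 * v 1 + u 2 * v 2)) * hu3 i + (v 1 * (u 0 * u 0 + u 1 * u 1 + u 2 * u 2) - u 1 * (u 0 * v 0 + u 1 * v 1 + u 2 * v 2)) * hv3 i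
  have key2 : ∀ i : Fin 3, ((u 1 * v 2 - u 2 * v 1) ^ 2 + (u 2 * v 0 - u 0 * v 2) ^ 2 + (u 0 * v 1 - u 1 * v 0) ^ 2) * a i 2 = (u 0 * v 1 - u 1 * v 0) * (a i 0 * (u 1 * v 2 - u 2 * v 1) + a i 1 * (u 2 * v 0 - u 0 * v 2) + a i 2 * (u 0 * v 1 - u 1 * v 0)) := by
    intro i
    linear_combination (u 2 * (v 0 * v 0 + v 1 * v 1 + v 2 * v 2) - v 2 * (u 0 * v 0 + u 1 * v 1 + u 2 * v 2)) * hu3 i + (v 2 * (u 0 * u 0 + u 1 * u 1 + u 2 * u 2) - u 2 * (u 0 * v 0 + u 1 * v 1 + u 2 * v 2)) * hv3 i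
  have hct : (a 0 0 * (u 1 * v 2 - u 2 * v 1) + a 0 1 * (u 2 * v 0 - u 0 * v 2) + a 0 2 * (u 0 * v 1 - u 1 * v 0)) * (u 1 * v 2 - u 2 * v 1) + (a 1 0 * (u 1 * v 2 - u 2 * v 1) + a 1 1 * (u 2 * v 0 - u 0 * v 2) + a 1 2 * (u 0 * v 1 - u 1 * v 0)) * (u 2 * v 0 - u 0 * v 2) + (a 2 0 * (u 1 * v 2 - u 2 * v 1) + a 2 1 * (u 2 * v 0 - u 0 * v 2) + a 2 2 * (u 0 * v 1 - u 1 * v 0)) * (u 0 * v 1 - u 1 * v 0) = 0 := by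
    linear_combination (-1 : ℝ) * key0 0 + (-1 : ℝ) * key1 1 + (-1 : ℝ) * key2 2 + ((u 1 * v 2 - u 2 * v 1) ^ 2 + (u 2 * v 0 - u 0 * v 2) ^ 2 + (u 0 * v 1 - u 1 * v 0) ^ 2) * htr
  have htz0 : ((u 1 * v 2 - u 2 * v 1) ^ 2 + (u 2 * v 0 - u 0 * v 2) ^ 2 + (u 0 * v 1 - u 1 * v 0) ^ 2) * (a 0 0 * (u 1 * v 2 - u 2 * v 1) + a 0 1 * (u 2 * v 0 - u 0 * v 2) + a 0 2 * (u 0 * v 1 - u 1 * v 0)) = 0 := by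
    linear_combination (u 1 * v 2 - u 2 * v 1) * key0 0 + (u 2 * v 0 - u 0 * v 2) * key0 1 + (u 0 * v 1 - u 1 * v 0) * key0 2 + (u 1 * v 2 - u 2 * v 1) * hct + ((u 1 * v 2 - u 2 * v 1) ^ 2 + (u 2 * v 0 - u 0 * v 2) ^ 2 + (u 0 * v 1 - u 1 * v 0) ^ 2) * ((u 1 * v 2 - u 2 * v 1) * hsym 0 0 + (u 2 * v 0 - u 0 * v 2) * hsym 0 1 + (u 0 * v 1 - u 1 * v 0) * hsym 0 2)
  have tz0 : (a 0 0 * (u 1 * v 2 - u 2 * v 1) + a 0 1 * (u 2 * v 0 - u 0 * v 2) + a 0 2 * (u 0 * v 1 - u 1 * v 0)) = 0 := (mul_eq_zero.mp htz0).resolve_left hN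
  have htz1 : ((u 1 * v 2 - u 2 * v 1) ^ 2 + (u 2 * v 0 - u 0 * v 2) ^ 2 + (u 0 * v 1 - u 1 * v 0) ^ 2) * (a 1 0 * (u 1 * v 2 - u 2 * v 1) + a 1 1 * (u 2 * v 0 - u 0 * v 2) + a 1 2 * (u 0 * v 1 - u 1 * v 0)) = 0 := by
    linear_combination (u 1 * v 2 - u 2 * v 1) * key1 0 + (u 2 * v 0 - u 0 * v 2) * key1 1 + (u 0 * v 1 - u 1 * v 0) * key1 2 + (u 2 * v 0 - u 0 * v 2) * hct + ((u 1 * v 2 - u 2 * v 1) ^ 2 + (u 2 * v 0 - u 0 * v 2) ^ 2 + (u 0 * v 1 - u 1 * v 0) ^ 2) * ((u 1 * v 2 - u 2 * v 1) * hsym 1 0 + (u 2 * v 0 - u 0 * v 2) * hsym 1 1 + (u 0 * v 1 - u 1 * v 0) * hsym 1 2)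
  have tz1 : (a 1 0 * (u 1 * v 2 - u 2 * v 1) + a 1 1 * (u 2 * v 0 - u 0 * v 2) + a 1 2 * (u 0 * v 1 - u 1 * v 0)) = 0 := (mul_eq_zero.mp htz1).resolve_left hN
  have htz2 : ((u 1 * v 2 - u 2 * v 1) ^ 2 + (u 2 * v 0 - u 0 * v 2) ^ 2 + (u 0 * v 1 - u 1 * v 0) ^ 2) * (a 2 0 * (u 1 * v 2 - u 2 * v 1) + a 2 1 * (u 2 * v 0 - u 0 * v 2) + a 2 2 * (u 0 * v 1 - u 1 * v 0)) = 0 := by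
    linear_combination (u 1 * v 2 - u 2 * v 1) * key2 0 + (u 2 * v 0 - u 0 * v 2) * key2 1 + (u 0 * v 1 - u 1 * v 0) * key2 2 + (u 0 * v 1 - u 1 * v 0) * hct + ((u 1 * v 2 - u 2 * v 1) ^ 2 + (u 2 * v 0 - u 0 * v 2) ^ 2 + (u 0 * v 1 - u 1 * v 0) ^ 2) * ((u 1 * v 2 - u 2 * v 1) * hsym 2 0 + (u 2 * v 0 - u 0 * v 2) * hsym 2 1 + (u 0 * v 1 - u 1 * v 0) * hsym 2 2)
  have tz2 : (a 2 0 * (u 1 * v 2 - u 2 * v 1) + a 2 1 * (u 2 * v 0 - u 0 * v 2) + a 2 2 * (u 0 * v 1 - u 1 * v 0)) = 0 := (mul_eq_zero.mp htz2).resolve_left hN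
  have haz : ∀ i k, a i k = 0 := by
    have hz00 : ((u 1 * v 2 - u 2 * v 1) ^ 2 + (u 2 * v 0 - u 0 * v 2) ^ 2 + (u 0 * v 1 - u 1 * v 0) ^ 2) * a 0 0 = 0 := by
      linear_combination key0 0 + (u 1 * v 2 - u 2 * v 1) * tz0
    have e00 : a 0 0 = 0 := (mul_eq_zero.mp hz00).resolve_left hN
    have hz01 : ((u 1 * v 2 - u 2 * v 1) ^ 2 + (u 2 * v 0 - u 0 * v 2) ^ 2 + (u 0 * v 1 - u 1 * v 0) ^ 2) * a 0 1 = 0 := by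
      linear_combination key1 0 + (u 2 * v 0 - u 0 * v 2) * tz0
    have e01 : a 0 1 = 0 := (mul_eq_zero.mp hz01).resolve_left hN
    have hz02 : ((u 1 * v 2 - u 2 * v 1) ^ 2 + (u 2 * v 0 - u 0 * v 2) ^ 2 + (u 0 * v 1 - u 1 * v 0) ^ 2) * a 0 2 = 0 := by
      linear_combination key2 0 + (u 0 * v 1 - u 1 * v 0) * tz0
    have e02 : a 0 2 = 0 := (mul_eq_zero.mp hz02).resolve_left hN
    have hz10 : ((u 1 * v 2 - u 2 * v 1) ^ 2 + (u 2 * v 0 - u 0 * v 2) ^ 2 + (u 0 * v 1 - u 1 * v 0) ^ 2) * a 1 0 = 0 := by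
      linear_combination key0 1 + (u 1 * v 2 - u 2 * v 1) * tz1
    have e10 : a 1 0 = 0 := (mul_eq_zero.mp hz10).resolve_left hN
    have hz11 : ((u 1 * v 2 - u 2 * v 1) ^ 2 + (u 2 * v 0 - u 0 * v 2) ^ 2 + (u 0 * v 1 - u 1 * v 0) ^ 2) * a 1 1 = 0 := by
      linear_combination key1 1 + (u 2 * v 0 - u 0 * v 2) * tz1
    have e11 : a 1 1 = 0 := (mul_eq_zero.mp hz11).resolve_left hN
    have hz12 : ((u 1 * v 2 - u 2 * v 1) ^ 2 + (u 2 * v 0 - u 0 * v 2) ^ 2 + (u 0 * v 1 - u 1 * v 0) ^ 2) * a 1 2 = 0 := by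
      linear_combination key2 1 + (u 0 * v 1 - u 1 * v 0) * tz1
    have e12 : a 1 2 = 0 := (mul_eq_zero.mp hz12).resolve_left hN
    have hz20 : ((u 1 * v 2 - u 2 * v 1) ^ 2 + (u 2 * v 0 - u 0 * v 2) ^ 2 + (u 0 * v 1 - u 1 * v 0) ^ 2) * a 2 0 = 0 := by
      linear_combination key0 2 + (u 1 * v 2 - u 2 * v 1) * tz2
    have e20 : a 2 0 = 0 := (mul_eq_zero.mp hz20).resolve_left hN
    have hz21 : ((u 1 * v 2 - u 2 * v 1) ^ 2 + (u 2 * v 0 - u 0 * v 2) ^ 2 + (u 0 * v 1 - u 1 * v 0) ^ 2) * a 2 1 = 0 := by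
      linear_combination key1 2 + (u 2 * v 0 - u 0 * v 2) * tz2
    have e21 : a 2 1 = 0 := (mul_eq_zero.mp hz21).resolve_left hN
    have hz22 : ((u 1 * v 2 - u 2 * v 1) ^ 2 + (u 2 * v 0 - u 0 * v 2) ^ 2 + (u 0 * v 1 - u 1 * v 0) ^ 2) * a 2 2 = 0 := by
      linear_combination key2 2 + (u 0 * v 1 - u 1 * v 0) * tz2
    have e22 : a 2 2 = 0 := (mul_eq_zero.mp hz22).resolve_left hN
    intro i k
    fin_cases i <;> fin_cases k <;> assumption
  refine ContinuousLinearMap.ext fun x => funext fun i => ?_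
  rw [hlin x i]
  simp [Fin.sum_univ_three, haz]
end

section
/- For a real n×n matrix A whose kernel has dimension at least n−1, the characteristic polynomial of A equals X^(n−1) · (X − trace A); in particular if trace A = 0 then the characteristic polynomial is Xⁿ. -/
/-! Complete n − 1 independent kernel vectors to a basis by one more vector. In that basis only the
last column of the matrix of `A` can be nonzero, so the matrix is upper triangular with diagonal
`(0, …, 0, tr A)`. -/

open Polynomial Module

theorem Matrix.charpoly_eq_X_pow_mul_of_eq_zero_of_ne_last {R : Type*} [CommRing R] {m : ℕ}
    (B : Matrix (Fin (m + 1)) (Fin (m + 1)) R) (hB : ∀ i j, j ≠ Fin.last m → B i j = 0) :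
    B.charpoly = X ^ m * (X - C B.trace) := by
  have hdiag (j : Fin m) : B j.castSucc j.castSucc = 0 := hB _ _ (Fin.castSucc_lt_last j).ne
  have htri : B.IsUpperTriangular := fun i j hij =>
    hB i j fun hj => by simp [hj, not_lt.2 (Fin.le_last i)] at hij
  rw [charpoly_of_isUpperTriangular B htri, Fin.prod_univ_castSucc, Matrix.trace,
    Fin.sum_univ_castSucc]
  simp [hdiag]

theorem Submodule.exists_basis_castSucc_mem {K V : Type*} [Field K] [AddCommGroup V] [Module K V]
    {m : ℕ} (W : Submodule K V) (hV : finrank K V = m + 1) (hW : m ≤ finrank K W) :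
    ∃ b : Basis (Fin (m + 1)) K V, ∀ i : Fin m, b i.castSucc ∈ W := by
  have : FiniteDimensional K V := .of_finrank_eq_succ hV
  let v : Fin m → V := fun i => (finBasis K W (Fin.castLE hW i) : V)
  have hv : LinearIndependent K v :=
    ((finBasis K W).linearIndependent.comp _ (Fin.castLE_injective hW)).map' W.subtype
      W.ker_subtype
  obtain ⟨x, hx⟩ : ∃ x, x ∉ span K (Set.range v) := by
    by_contra! h
    have := finrank_span_eq_card hv
    rw [eq_top_iff'.2 h, finrank_top, hV, Fintype.card_fin] at this
    omega
  have hcard : Fintype.card (Fin (m + 1)) = finrank K V := by simp [hV]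
  refine ⟨basisOfLinearIndependentOfCardEqFinrank (linearIndependent_finSnoc.2 ⟨hv, hx⟩) hcard,
    fun i => ?_⟩
  simp [v]

theorem LinearMap.charpoly_eq_X_pow_mul_of_le_finrank_ker {K V : Type*} [Field K]
    [AddCommGroup V] [Module K V] [FiniteDimensional K V] {m : ℕ} (f : V →ₗ[K] V)
    (hV : finrank K V = m + 1) (hker : m ≤ finrank K (ker f)) :
    f.charpoly = X ^ m * (X - C (trace K V f)) := by
  obtain ⟨b, hb⟩ := (ker f).exists_basis_castSucc_mem hV hker
  rw [← charpoly_toMatrix f b, trace_eq_matrix_trace K b f]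
  refine Matrix.charpoly_eq_X_pow_mul_of_eq_zero_of_ne_last _ fun i j hj => ?_
  obtain ⟨j, rfl⟩ := Fin.exists_castSucc_eq.2 hj
  simp [toMatrix_apply, mem_ker.1 (hb j)]

open Polynomial in
theorem stmt_8 (n : ℕ) (hn : 1 ≤ n) (A : Matrix (Fin n) (Fin n) ℝ)
    (hker : n - 1 ≤ Module.finrank ℝ (LinearMap.ker A.mulVecLin)) :
    A.charpoly = X ^ (n - 1) * (X - C A.trace) ∧
      (A.trace = 0 → A.charpoly = X ^ n) := by
  obtain ⟨m, rfl⟩ := Nat.exists_eq_add_of_le' hn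
  rw [Nat.add_sub_cancel] at hker ⊢
  have h := A.mulVecLin.charpoly_eq_X_pow_mul_of_le_finrank_ker (by simp) hker
  rw [Matrix.charpoly_mulVecLin, ← Matrix.toLin'_apply', Matrix.trace_toLin'_eq] at h
  exact ⟨h, fun h0 => by rw [h, h0, map_zero, sub_zero, pow_succ]⟩
end
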